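/- arXiv:2010.15404 — 3 statements merged into one kernel-verified Lean document; each statement's English description precedes it below -/
import Mathlib

section
/- If m ≥ 3, then the task quality function q is submodular: for all finite sets X, Y ⊆ {1,…,m}, q(X ∩ Y) + q(X ∪ Y) ≤ q(X) + q(Y). -/
/-- Temporal distance between slots `j` and `e`. -/
def tdist (j e : ℕ) : ℕ := ((j : ℤ) - (e : ℤ)).natAbs

/-- Padded `k`-NN distance sum `I_k^S(j)`. -/
def Ik (m k : ℕ) (S : Finset ℕ) (j : ℕ) : ℕ :=
  if k ≤ S.card then
    (((S.val.map (fun e => tdist j e)).sort (· ≤ ·)).take k).sum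
  else
    (S.val.map (fun e => tdist j e)).sum + (k - S.card) * m

/-- Interpolation error ratio `ρ^S(j)`. -/
noncomputable def rho (m k : ℕ) (S : Finset ℕ) (j : ℕ) : ℝ :=
  if j ∈ S then 0 else (Ik m k S j : ℝ) / ((k : ℝ) * (m : ℝ))

/-- Subtask finishing probability `p^S(j)`. -/
noncomputable def prob (m k : ℕ) (S : Finset ℕ) (j : ℕ) : ℝ :=
  (1 / (m : ℝ)) * (1 - rho m k S j)

/-- Task quality `q(S)` (note `Real.logb 2 0 = 0`, so the convention
`0 · log₂ 0 = 0` holds definitionally). -/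
noncomputable def quality (m k : ℕ) (S : Finset ℕ) : ℝ :=
  ∑ j ∈ Finset.Icc 1 m, -(prob m k S j * Real.logb 2 (prob m k S j))

open Finset

/-!
Fix a slot `j`. For `t < m` let `N_S(t)` be the number of executed slots within distance `t`
of `j`. By the layer-cake formula, `I_k^S(j) = ∑_{t<m} (k - min k N_S(t))`: each padding term
`m` counts as a neighbour missing at every radius `t < m`. Since `N_S(t)` is modular in `S`
and `n ↦ k - min k n` is convex and antitone, `I_k^S(j)` is antitone and supermodular in `S`;
hence so is `ρ^S(j)`, and `p^S(j)` is monotone and submodular with values in `[0, 1/m]`.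
For `m ≥ 3` this interval lies in `[0, e⁻¹]`, where `x ↦ -x log x` is concave and increasing,
and such a function preserves submodularity of a monotone set function.
-/

theorem ConcaveOn.add_le_add_of_add_eq {𝕜 : Type*} [Field 𝕜] [LinearOrder 𝕜]
    [IsStrictOrderedRing 𝕜] {s : Set 𝕜} {f : 𝕜 → 𝕜} (hf : ConcaveOn 𝕜 s f)
    {a b c d : 𝕜} (ha : a ∈ s) (hd : d ∈ s) (hab : a ≤ b) (hbd : b ≤ d) (h : a + d = b + c) :
    f a + f d ≤ f b + f c := by
  obtain rfl | had := (hab.trans hbd).eq_or_lt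
  · obtain rfl : b = a := le_antisymm hbd hab
    obtain rfl : c = b := by linarith
    rfl
  set θ := (d - b) / (d - a)
  have hθ : θ * (d - a) = d - b := div_mul_cancel₀ _ (sub_pos.2 had).ne'
  have hθ0 : 0 ≤ θ := div_nonneg (sub_nonneg.2 hbd) (sub_nonneg.2 had.le)
  have hθ1 : θ ≤ 1 := div_le_one_of_le₀ (by linarith) (sub_nonneg.2 had.le)
  have hb := hf.2 ha hd hθ0 (sub_nonneg.2 hθ1) (add_sub_cancel θ 1)
  have hc := hf.2 ha hd (sub_nonneg.2 hθ1) hθ0 (sub_add_cancel 1 θ)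
  simp only [smul_eq_mul] at hb hc
  rw [show θ * a + (1 - θ) * d = b by linear_combination -hθ] at hb
  rw [show (1 - θ) * a + θ * d = c by linear_combination hθ + h] at hc
  linarith

theorem ConcaveOn.add_le_add_of_add_le {𝕜 : Type*} [Field 𝕜] [LinearOrder 𝕜]
    [IsStrictOrderedRing 𝕜] {s : Set 𝕜} {f : 𝕜 → 𝕜} (hf : ConcaveOn 𝕜 s f)
    (hf' : MonotoneOn f s) {a b c d : 𝕜} (ha : a ∈ s) (hd : d ∈ s) (hbd : b ≤ d) (hcd : c ≤ d)
    (h : a + d ≤ b + c) :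
    f a + f d ≤ f b + f c := by
  have hs := hf.1.ordConnected
  have hc : c ∈ s := hs.out ha hd ⟨by linarith, hcd⟩
  have hc' : a + d - b ∈ s := hs.out ha hd ⟨by linarith, by linarith⟩
  have := hf.add_le_add_of_add_eq ha hd (by linarith) hbd (add_sub_cancel b (a + d)).symm
  linarith [hf' hc' hc (by linarith)]

theorem Real.monotoneOn_negMulLog : MonotoneOn Real.negMulLog (Set.Icc 0 (Real.exp (-1))) := by
  intro x hx y hy hxy
  simpa [Real.negMulLog_eq_neg] using Real.mul_log_strictAntiOn.antitoneOn hx hy hxy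

theorem List.countP_le_take_of_pairwise {α : Type*} [Preorder α] [DecidableLE α] (t : α) :
    ∀ {l : List α}, l.Pairwise (· ≤ ·) → ∀ k,
      (l.take k).countP (· ≤ t) = min k (l.countP (· ≤ t))
  | [], _, k => by simp
  | _ :: _, _, 0 => by simp
  | a :: l, hl, k + 1 => by
    rw [List.pairwise_cons] at hl
    by_cases hat : a ≤ t
    · simp [hat, List.countP_le_take_of_pairwise t hl.2 k]
    · have hl_gt : ∀ b ∈ l, ¬ b ≤ t := fun b hb hbt => hat ((hl.1 b hb).trans hbt)
      have h₁ : l.countP (· ≤ t) = 0 := List.countP_eq_zero.2 (by simpa using hl_gt)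
      have h₂ : (l.take k).countP (· ≤ t) = 0 :=
        List.countP_eq_zero.2 (by simpa using fun b hb => hl_gt b (List.mem_of_mem_take hb))
      simp [hat, h₁, h₂]

theorem Multiset.sum_eq_sum_range_countP_lt {m : ℕ} {M : Multiset ℕ} (h : ∀ x ∈ M, x ≤ m) :
    M.sum = ∑ t ∈ Finset.range m, M.countP (t < ·) := by
  induction M using Multiset.induction with
  | empty => simp
  | cons a M ih =>
    have ha : a = ∑ t ∈ Finset.range m, if t < a then 1 else 0 := by
      have := h a (Multiset.mem_cons_self ..)
      rw [Finset.sum_boole, Nat.cast_id, Finset.range_eq_Ico, Finset.Ico_filter_lt,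
        Nat.card_Ico, min_eq_right this, Nat.sub_zero]
    calc (a ::ₘ M).sum
        = (∑ t ∈ Finset.range m, if t < a then 1 else 0) +
            ∑ t ∈ Finset.range m, M.countP (t < ·) := by
          rw [Multiset.sum_cons, ← ha, ih fun x hx => h x (Multiset.mem_cons_of_mem hx)]
      _ = _ := by simp only [← Finset.sum_add_distrib, Multiset.countP_cons, add_comm]

theorem Multiset.countP_lt_add_countP_le {α : Type*} [LinearOrder α] (M : Multiset α) (t : α) :
    M.countP (t < ·) + M.countP (· ≤ t) = card M := by
  rw [Multiset.card_eq_countP_add_countP (· ≤ t), add_comm]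
  simp only [not_le]

theorem tdist_lt_of_mem_Icc {m j e : ℕ} (hj : j ∈ Icc 1 m) (he : e ∈ Icc 1 m) :
    tdist j e < m := by
  rw [mem_Icc] at hj he
  unfold tdist
  omega

section

variable {m k j : ℕ} {S T X Y : Finset ℕ}

theorem Ik_eq_sum_range (h : ∀ e ∈ S, tdist j e ≤ m) :
    Ik m k S j = ∑ t ∈ range m, (k - min k #{e ∈ S | tdist j e ≤ t}) := by
  set M := S.val.map (tdist j ·)
  have hM : ∀ x ∈ M, x ≤ m := by simpa [M] using h
  have hcount : ∀ t, M.countP (· ≤ t) = #{e ∈ S | tdist j e ≤ t} := fun t => by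
    rw [Multiset.countP_map]; rfl
  have hcard : Multiset.card M = #S := by simp [M]
  unfold Ik
  split_ifs with hk
  · set l := M.sort (· ≤ ·)
    have hl : (l : Multiset ℕ) = M := Multiset.sort_eq ..
    have hlen : (l.take k).length = k := by simp [l, hcard, hk]
    rw [← Multiset.sum_coe, Multiset.sum_eq_sum_range_countP_lt (m := m)]
    · refine sum_congr rfl fun t _ => ?_
      have hcl : l.countP (· ≤ t) = #{e ∈ S | tdist j e ≤ t} := by
        rw [← hcount, ← hl, Multiset.coe_countP]
      have := Multiset.countP_lt_add_countP_le (l.take k) t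
      rw [Multiset.coe_countP (· ≤ t) (l.take k),
        List.countP_le_take_of_pairwise t (Multiset.pairwise_sort ..), hcl, Multiset.coe_card,
        hlen] at this
      omega
    · exact fun x hx => hM x (hl ▸ Multiset.mem_coe.2 (List.mem_of_mem_take hx))
  · rw [Multiset.sum_eq_sum_range_countP_lt hM,
      show (k - #S) * m = ∑ _t ∈ range m, (k - #S) by simp [mul_comm], ← sum_add_distrib]
    refine sum_congr rfl fun t _ => ?_
    have := M.countP_lt_add_countP_le t
    have hle : #{e ∈ S | tdist j e ≤ t} ≤ #S := card_filter_le _ _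
    rw [hcount, hcard] at this
    omega

theorem Ik_le_mul (h : ∀ e ∈ S, tdist j e ≤ m) : Ik m k S j ≤ k * m := by
  rw [Ik_eq_sum_range h, mul_comm]
  simpa using sum_le_sum fun t (_ : t ∈ range m) => Nat.sub_le k (min k #{e ∈ S | tdist j e ≤ t})

theorem Ik_le_Ik_of_subset (hST : S ⊆ T) (hT : ∀ e ∈ T, tdist j e ≤ m) :
    Ik m k T j ≤ Ik m k S j := by
  rw [Ik_eq_sum_range hT, Ik_eq_sum_range fun e he => hT e (hST he)]
  refine sum_le_sum fun t _ => ?_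
  have := card_le_card (filter_subset_filter (tdist j · ≤ t) hST)
  omega

theorem Ik_add_Ik_le_Ik_inter_add_Ik_union (h : ∀ e ∈ X ∪ Y, tdist j e ≤ m) :
    Ik m k X j + Ik m k Y j ≤ Ik m k (X ∩ Y) j + Ik m k (X ∪ Y) j := by
  rw [Ik_eq_sum_range h, Ik_eq_sum_range fun e he => h e (mem_union_left Y he),
    Ik_eq_sum_range fun e he => h e (mem_union_right X he),
    Ik_eq_sum_range fun e he => h e (mem_union_left Y (mem_of_mem_inter_left he)),
    ← sum_add_distrib, ← sum_add_distrib]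
  refine sum_le_sum fun t _ => ?_
  have hmod := card_inter_add_card_union {e ∈ X | tdist j e ≤ t} {e ∈ Y | tdist j e ≤ t}
  rw [← filter_inter_distrib, ← filter_union] at hmod
  have := card_le_card (filter_subset_filter (tdist j · ≤ t) (inter_subset_left : X ∩ Y ⊆ X))
  have := card_le_card (filter_subset_filter (tdist j · ≤ t) (subset_union_left : X ⊆ X ∪ Y))
  omega

theorem rho_of_mem (h : j ∈ S) : rho m k S j = 0 := if_pos h

theorem rho_of_notMem (h : j ∉ S) : rho m k S j = Ik m k S j / (k * m) := if_neg h

theorem rho_nonneg : 0 ≤ rho m k S j := by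
  unfold rho
  split_ifs <;> positivity

theorem rho_le_one (h : ∀ e ∈ S, tdist j e ≤ m) : rho m k S j ≤ 1 := by
  unfold rho
  split_ifs
  · exact zero_le_one
  · exact div_le_one_of_le₀ (by exact_mod_cast Ik_le_mul h) (by positivity)

theorem rho_le_rho_of_subset (hST : S ⊆ T) (hT : ∀ e ∈ T, tdist j e ≤ m) :
    rho m k T j ≤ rho m k S j := by
  by_cases hjT : j ∈ T
  · exact rho_of_mem hjT ▸ rho_nonneg
  · rw [rho_of_notMem hjT, rho_of_notMem fun h => hjT (hST h)]
    exact div_le_div_of_nonneg_right (by exact_mod_cast Ik_le_Ik_of_subset hST hT) (by positivity)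

theorem rho_add_rho_le_rho_inter_add_rho_union (h : ∀ e ∈ X ∪ Y, tdist j e ≤ m) :
    rho m k X j + rho m k Y j ≤ rho m k (X ∩ Y) j + rho m k (X ∪ Y) j := by
  have hX : ∀ e ∈ X, tdist j e ≤ m := fun e he => h e (mem_union_left Y he)
  have hY : ∀ e ∈ Y, tdist j e ≤ m := fun e he => h e (mem_union_right X he)
  by_cases hjX : j ∈ X <;> by_cases hjY : j ∈ Y
  · simp [rho_of_mem, hjX, hjY]
  · rw [rho_of_mem hjX, rho_of_mem (mem_union_left Y hjX), zero_add, add_zero]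
    exact rho_le_rho_of_subset inter_subset_right hY
  · rw [rho_of_mem hjY, rho_of_mem (mem_union_right X hjY), add_zero, add_zero]
    exact rho_le_rho_of_subset inter_subset_left hX
  · rw [rho_of_notMem hjX, rho_of_notMem hjY, rho_of_notMem (by simp [hjX]),
      rho_of_notMem (by simp [hjX, hjY]), ← add_div, ← add_div]
    refine div_le_div_of_nonneg_right ?_ (by positivity)
    exact_mod_cast Ik_add_Ik_le_Ik_inter_add_Ik_union h

theorem prob_nonneg (h : ∀ e ∈ S, tdist j e ≤ m) : 0 ≤ prob m k S j :=
  mul_nonneg (by positivity) (sub_nonneg.2 (rho_le_one h))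

theorem prob_le_one_div : prob m k S j ≤ 1 / m :=
  mul_le_of_le_one_right (by positivity) (sub_le_self 1 rho_nonneg)

theorem prob_mem_Icc_zero_exp_neg_one (hm : 3 ≤ m) (h : ∀ e ∈ S, tdist j e ≤ m) :
    prob m k S j ∈ Set.Icc 0 (Real.exp (-1)) := by
  refine ⟨prob_nonneg h, prob_le_one_div.trans ?_⟩
  rw [Real.exp_neg, one_div]
  refine inv_anti₀ (Real.exp_pos 1) (Real.exp_one_lt_three.le.trans ?_)
  exact_mod_cast hm

theorem prob_le_prob_of_subset (hST : S ⊆ T) (hT : ∀ e ∈ T, tdist j e ≤ m) :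
    prob m k S j ≤ prob m k T j :=
  mul_le_mul_of_nonneg_left (sub_le_sub_left (rho_le_rho_of_subset hST hT) 1) (by positivity)

theorem prob_inter_add_prob_union_le (h : ∀ e ∈ X ∪ Y, tdist j e ≤ m) :
    prob m k (X ∩ Y) j + prob m k (X ∪ Y) j ≤ prob m k X j + prob m k Y j := by
  simp only [prob, ← mul_add]
  have := rho_add_rho_le_rho_inter_add_rho_union (k := k) h
  exact mul_le_mul_of_nonneg_left (by linarith) (by positivity)

theorem quality_eq_sum_negMulLog :
    quality m k S = (∑ j ∈ Icc 1 m, Real.negMulLog (prob m k S j)) / Real.log 2 := by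
  rw [quality, sum_div]
  refine sum_congr rfl fun j _ => ?_
  rw [Real.logb, Real.negMulLog]
  ring

end

theorem quality_submodular_general (m k : ℕ) (hm : 3 ≤ m)
    (X Y : Finset ℕ) (hX : X ⊆ Finset.Icc 1 m) (hY : Y ⊆ Finset.Icc 1 m) :
    quality m k (X ∩ Y) + quality m k (X ∪ Y) ≤ quality m k X + quality m k Y := by
  simp only [quality_eq_sum_negMulLog, ← add_div, ← sum_add_distrib]
  refine div_le_div_of_nonneg_right (sum_le_sum fun j hj => ?_) (Real.log_nonneg one_le_two)
  have hdist : ∀ e ∈ X ∪ Y, tdist j e ≤ m :=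
    fun e he => (tdist_lt_of_mem_Icc hj (union_subset hX hY he)).le
  have hprob : ∀ S ⊆ X ∪ Y, prob m k S j ∈ Set.Icc 0 (Real.exp (-1)) :=
    fun S hS => prob_mem_Icc_zero_exp_neg_one hm fun e he => hdist e (hS he)
  have hconc : ConcaveOn ℝ (Set.Icc 0 (Real.exp (-1))) Real.negMulLog :=
    Real.concaveOn_negMulLog.subset Set.Icc_subset_Ici_self (convex_Icc _ _)
  exact hconc.add_le_add_of_add_le Real.monotoneOn_negMulLog
    (hprob _ (inter_subset_left.trans subset_union_left)) (hprob _ subset_rfl)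
    (prob_le_prob_of_subset subset_union_left hdist)
    (prob_le_prob_of_subset subset_union_right hdist) (prob_inter_add_prob_union_le hdist)

/-- If `m ≥ 3`, the task quality is submodular. -/
theorem quality_submodular (m k : ℕ) (hm : 3 ≤ m) (hk : 1 ≤ k)
    (X Y : Finset ℕ) (hX : X ⊆ Finset.Icc 1 m) (hY : Y ⊆ Finset.Icc 1 m) :
    quality m k (X ∩ Y) + quality m k (X ∪ Y) ≤ quality m k X + quality m k Y :=
  quality_submodular_general m k hm X Y hX hY
end

section
/- For every slot j ∈ {1,…,m}, the set function S ↦ p^S(j) is non-decreasing: for all finite sets S ⊆ T ⊆ {1,…,m}, p^S(j) ≤ p^T(j); equivalently, the error ratio is non-increasing, i.e. ρ^T(j) ≤ ρ^S(j). -/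
theorem List.sum_take_le_sum_take_of_sublist {α : Type*} [AddCommMonoid α] [PartialOrder α]
    [IsOrderedAddMonoid α] {l₁ l₂ : List α} (h : l₁.Sublist l₂) (hl₂ : l₂.Pairwise (· ≤ ·)) :
    ∀ {k : ℕ}, k ≤ l₁.length → (l₂.take k).sum ≤ (l₁.take k).sum := by
  induction h with
  | slnil => simp
  | @cons l₁ l₂ a h ih =>
    rintro (_ | k) hk
    · simp
    have hk₂ : k < l₂.length := Nat.lt_of_succ_le (hk.trans h.length_le)
    calc ((a :: l₂).take (k + 1)).sum = a + (l₂.take k).sum := by simp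
      _ ≤ (l₂.take k).sum + l₂[k] := by
        rw [add_comm]
        gcongr
        exact (List.pairwise_cons.mp hl₂).1 _ (List.getElem_mem hk₂)
      _ = (l₂.take (k + 1)).sum := (List.sum_take_succ _ _ hk₂).symm
      _ ≤ (l₁.take (k + 1)).sum := ih hl₂.of_cons hk
  | cons_cons a _ ih =>
    rintro (_ | k) hk
    · simp
    simpa using add_le_add (le_refl a) (ih hl₂.of_cons (Nat.le_of_succ_le_succ hk))

theorem Multiset.sum_take_sort_le_of_le {α : Type*} [LinearOrder α] [AddCommMonoid α]
    [IsOrderedAddMonoid α] {s t : Multiset α} (hst : s ≤ t) {k : ℕ} (hk : k ≤ card s) :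
    ((t.sort (· ≤ ·)).take k).sum ≤ ((s.sort (· ≤ ·)).take k).sum := by
  have hsub : (s.sort (· ≤ ·)).Sublist (t.sort (· ≤ ·)) :=
    List.sublist_of_subperm_of_pairwise (Multiset.coe_le.mp (by simpa using hst))
      (Multiset.pairwise_sort _ _) (Multiset.pairwise_sort _ _)
  exact List.sum_take_le_sum_take_of_sublist hsub (Multiset.pairwise_sort _ _)
    (by rwa [Multiset.length_sort])

theorem Multiset.sort_add_replicate {α : Type*} [LinearOrder α] {s : Multiset α} {b : α}
    (hs : ∀ x ∈ s, x ≤ b) (n : ℕ) :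
    (s + replicate n b).sort (· ≤ ·) = s.sort (· ≤ ·) ++ List.replicate n b := by
  refine List.Perm.eq_of_pairwise' (Multiset.pairwise_sort _ _) ?_ ?_
  · refine List.pairwise_append.mpr ⟨Multiset.pairwise_sort _ _, ?_, ?_⟩
    · exact List.pairwise_replicate.mpr (Or.inr le_rfl)
    · intro x hx y hy
      rw [List.eq_of_mem_replicate hy]
      exact hs x ((Multiset.mem_sort _).mp hx)
  · rw [← Multiset.coe_eq_coe, ← Multiset.coe_add, Multiset.sort_eq, Multiset.sort_eq,
      Multiset.coe_replicate]

theorem Ik_eq_sum_take_sort_padded {m k : ℕ} {S : Finset ℕ} {j : ℕ}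
    (hS : ∀ e ∈ S, tdist j e ≤ m) :
    Ik m k S j =
      (((S.val.map (tdist j) + Multiset.replicate k m).sort (· ≤ ·)).take k).sum := by
  have hdist : ∀ x ∈ S.val.map (tdist j), x ≤ m := by
    simpa using hS
  have hlen : ((S.val.map (tdist j)).sort (· ≤ ·)).length = S.card := by
    simp
  rw [Multiset.sort_add_replicate hdist, List.take_append, List.take_replicate, Ik, hlen]
  split_ifs with hk
  · simp [Nat.sub_eq_zero_of_le hk]
  · rw [List.take_of_length_le (by omega), List.sum_append, List.sum_replicate, smul_eq_mul,
      min_eq_left (Nat.sub_le _ _)]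
    conv_lhs => rw [← Multiset.sort_eq (S.val.map (tdist j)) (· ≤ ·), Multiset.sum_coe]

theorem tdist_le_of_le {j e m : ℕ} (hj : j ≤ m) (he : e ≤ m) : tdist j e ≤ m := by
  unfold tdist
  omega

theorem Ik_le_of_subset {m k : ℕ} {S T : Finset ℕ} {j : ℕ} (hST : S ⊆ T)
    (hT : ∀ e ∈ T, tdist j e ≤ m) : Ik m k T j ≤ Ik m k S j := by
  rw [Ik_eq_sum_take_sort_padded hT, Ik_eq_sum_take_sort_padded fun e he => hT e (hST he)]
  refine Multiset.sum_take_sort_le_of_le ?_ (by simp)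
  gcongr
  exact Finset.val_le_iff.mpr hST

theorem rho_le_of_subset {m k : ℕ} {S T : Finset ℕ} {j : ℕ} (hST : S ⊆ T)
    (hT : ∀ e ∈ T, tdist j e ≤ m) : rho m k T j ≤ rho m k S j := by
  by_cases hjS : j ∈ S
  · simp [rho, hjS, hST hjS]
  by_cases hjT : j ∈ T
  · rw [rho, if_pos hjT, rho, if_neg hjS]
    positivity
  rw [rho, if_neg hjT, rho, if_neg hjS]
  exact div_le_div_of_nonneg_right (by exact_mod_cast Ik_le_of_subset hST hT) (by positivity)

theorem prob_nondecreasing_general (m k : ℕ)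
    (j : ℕ) (hj : j ∈ Finset.Icc 1 m)
    (S T : Finset ℕ) (hT : T ⊆ Finset.Icc 1 m) (hST : S ⊆ T) :
    prob m k S j ≤ prob m k T j ∧ rho m k T j ≤ rho m k S j := by
  have hdist : ∀ e ∈ T, tdist j e ≤ m := fun e he =>
    tdist_le_of_le (Finset.mem_Icc.mp hj).2 (Finset.mem_Icc.mp (hT he)).2
  have hrho : rho m k T j ≤ rho m k S j := rho_le_of_subset hST hdist
  refine ⟨?_, hrho⟩
  unfold prob
  gcongr

/-- For every slot `j`, `S ↦ p^S(j)` is non-decreasing; equivalently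
`S ↦ ρ^S(j)` is non-increasing. -/
theorem prob_nondecreasing (m k : ℕ) (hm : 2 ≤ m) (hk : 1 ≤ k)
    (j : ℕ) (hj : j ∈ Finset.Icc 1 m)
    (S T : Finset ℕ) (hT : T ⊆ Finset.Icc 1 m) (hST : S ⊆ T) :
    prob m k S j ≤ prob m k T j ∧ rho m k T j ≤ rho m k S j :=
  prob_nondecreasing_general m k j hj S T hT hST
end

section
/- Let S ⊆ {1,…,m} be a finite set with |S| ≥ k, and let e and j be slots of {1,…,m} with e ∉ S and j ∉ S ∪ {e}. Let d_k denote the k-th smallest element of the multiset {|j − e'| : e' ∈ S}. Then executing e decreases the error ratio of j by exactly ρ^S(j) − ρ^{S ∪ {e}}(j) = max(0, d_k − |j − e|)/(k·m); in particular, the error ratio is unchanged if |j − e| ≥ d_k (e does not enter the k-NN set of j), and decreases by (d_k − |j − e|)/(k·m) if |j − e| < d_k (e replaces the k-th nearest executed subtask of j). -/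
/-!
Executing `e` inserts `|j − e|` into the sorted list of distances from `j` to the executed slots.
The sum of the first `k` entries changes only when the new value lands among them, and then it
pushes out the old `k`-th entry `d_k`. Both cases are captured by the single identity
`I_k^{S ∪ {e}}(j) + max(d_k, |j − e|) = I_k^S(j) + |j − e|`.
-/

theorem Multiset.sort_cons_eq_orderedInsert {α : Type*} (r : α → α → Prop) [DecidableRel r]
    [IsTrans α r] [Std.Antisymm r] [Std.Total r] (a : α) (s : Multiset α) :
    (a ::ₘ s).sort r = (s.sort r).orderedInsert r a :=
  Quot.inductionOn s fun l => by simp [List.mergeSort_eq_insertionSort]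

theorem List.sum_take_succ_orderedInsert_add_max {α : Type*} [LinearOrder α] [AddCommMonoid α]
    {l : List α} (hl : l.Pairwise (· ≤ ·)) (x : α) {n : ℕ} (hn : n < l.length) :
    ((l.orderedInsert (· ≤ ·) x).take (n + 1)).sum + max l[n] x = (l.take (n + 1)).sum + x := by
  induction l generalizing n with
  | nil => simp at hn
  | cons a t ih =>
    obtain ⟨ha, ht⟩ := List.pairwise_cons.mp hl
    by_cases hxa : x ≤ a
    · have hxn : x ≤ (a :: t)[n] := by
        cases n with
        | zero => exact hxa
        | succ n => exact hxa.trans (ha _ (List.getElem_mem _))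
      rw [List.orderedInsert_cons, if_pos hxa, List.take_succ_cons, List.sum_cons,
        max_eq_left hxn, List.sum_take_succ _ _ hn]
      abel
    · rw [List.orderedInsert_cons, if_neg hxa]
      cases n with
      | zero => simp [max_eq_right (le_of_not_ge hxa)]
      | succ n =>
        rw [List.take_succ_cons, List.take_succ_cons, List.sum_cons, List.sum_cons, add_assoc,
          List.getElem_cons_succ, ih ht (by simpa using hn), add_assoc]

def sortedDists (S : Finset ℕ) (j : ℕ) : List ℕ :=
  (S.val.map (fun e => tdist j e)).sort (· ≤ ·)

theorem sortedDists_insert {S : Finset ℕ} {e : ℕ} (heS : e ∉ S) (j : ℕ) :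
    sortedDists (insert e S) j = (sortedDists S j).orderedInsert (· ≤ ·) (tdist j e) := by
  rw [sortedDists, Finset.insert_val_of_notMem heS, Multiset.map_cons,
    Multiset.sort_cons_eq_orderedInsert, sortedDists]

theorem Ik_insert_add_max (m : ℕ) {k : ℕ} (hk : 1 ≤ k) {S : Finset ℕ} (hcard : k ≤ S.card)
    {e : ℕ} (heS : e ∉ S) (j : ℕ) :
    Ik m k (insert e S) j + max ((sortedDists S j).getD (k - 1) 0) (tdist j e) =
      Ik m k S j + tdist j e := by
  have hlen : k - 1 < (sortedDists S j).length := by simp [sortedDists]; omega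
  have hcard' : k ≤ (insert e S).card :=
    hcard.trans (Finset.card_le_card (Finset.subset_insert e S))
  obtain ⟨n, rfl⟩ : ∃ n, k = n + 1 := ⟨k - 1, by omega⟩
  rw [Ik, if_pos hcard', Ik, if_pos hcard, ← sortedDists, ← sortedDists, sortedDists_insert heS,
    List.getD_eq_getElem _ _ hlen]
  exact List.sum_take_succ_orderedInsert_add_max (Multiset.pairwise_sort _ _) _ hlen

theorem rho_sub_rho_insert (m : ℕ) {k : ℕ} (hk : 1 ≤ k) {S : Finset ℕ} (hcard : k ≤ S.card)
    {e : ℕ} (heS : e ∉ S) {j : ℕ} (hjS : j ∉ insert e S) :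
    rho m k S j - rho m k (insert e S) j =
      max 0 (((sortedDists S j).getD (k - 1) 0 : ℝ) - tdist j e) / (k * m) := by
  have hIk := congrArg (Nat.cast (R := ℝ)) (Ik_insert_add_max m hk hcard heS j)
  push_cast at hIk
  rw [rho, rho, if_neg (fun h => hjS (Finset.mem_insert_of_mem h)), if_neg hjS,
    div_sub_div_same, ← sub_self (tdist j e : ℝ), max_sub_sub_right, max_comm]
  congr 1
  linarith

theorem rho_change_large_general (m k : ℕ) (hk : 1 ≤ k)
    (S : Finset ℕ) (hcard : k ≤ S.card)
    (e : ℕ) (heS : e ∉ S)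
    (j : ℕ) (hjS : j ∉ S ∪ {e})
    (d : ℕ)
    (hd : d = (((S.val.map (fun e' => tdist j e')).sort (· ≤ ·)).getD (k - 1) 0)) :
    rho m k S j - rho m k (S ∪ {e}) j =
      max 0 ((d : ℝ) - (tdist j e : ℝ)) / ((k : ℝ) * (m : ℝ)) ∧
    (d ≤ tdist j e → rho m k (S ∪ {e}) j = rho m k S j) ∧
    (tdist j e < d →
      rho m k S j - rho m k (S ∪ {e}) j =
        ((d : ℝ) - (tdist j e : ℝ)) / ((k : ℝ) * (m : ℝ))) := by
  rw [Finset.union_singleton] at hjS ⊢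
  have hchange : rho m k S j - rho m k (insert e S) j =
      max 0 ((d : ℝ) - tdist j e) / (k * m) := by
    rw [hd]
    exact rho_sub_rho_insert m hk hcard heS hjS
  refine ⟨hchange, fun hle => ?_, fun hlt => ?_⟩
  · rw [max_eq_left (by simpa using hle), zero_div, sub_eq_zero] at hchange
    exact hchange.symm
  · rw [hchange, max_eq_right (by simpa using hlt.le)]

/-- When `|S| ≥ k`, executing a new slot `e` decreases the error ratio of an
unexecuted slot `j` by exactly `max(0, d_k − |j − e|)/(k·m)`, where `d_k` is
the `k`-th smallest distance from `j` to the executed slots of `S`. -/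
theorem rho_change_large (m k : ℕ) (hm : 2 ≤ m) (hk : 1 ≤ k)
    (S : Finset ℕ) (hS : S ⊆ Finset.Icc 1 m) (hcard : k ≤ S.card)
    (e : ℕ) (he : e ∈ Finset.Icc 1 m) (heS : e ∉ S)
    (j : ℕ) (hj : j ∈ Finset.Icc 1 m) (hjS : j ∉ S ∪ {e})
    (d : ℕ)
    (hd : d = (((S.val.map (fun e' => tdist j e')).sort (· ≤ ·)).getD (k - 1) 0)) :
    rho m k S j - rho m k (S ∪ {e}) j =
      max 0 ((d : ℝ) - (tdist j e : ℝ)) / ((k : ℝ) * (m : ℝ)) ∧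
    (d ≤ tdist j e → rho m k (S ∪ {e}) j = rho m k S j) ∧
    (tdist j e < d →
      rho m k S j - rho m k (S ∪ {e}) j =
        ((d : ℝ) - (tdist j e : ℝ)) / ((k : ℝ) * (m : ℝ))) :=
  rho_change_large_general m k hk S hcard e heS j hjS d hd
end
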